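/- There exists a constant c ≥ 0 with the following property. For every integer L ≥ 4 divisible by 4, every ε with 0 < ε ≤ 1/8, and every β ≥ 0, the restricted partition function Z^#(β,ε) = ∫_{A^#} exp(−β H_ε(φ)) dμ(φ) satisfies (Z^#(β,ε) / Z_Λ(β,ε))^{1/L²} ≤ 2·ε^{1/4}·ε^{−c/L}. -/

import Mathlib

open MeasureTheory Real

/-- The site space: the discrete torus of side `L`. -/
abbrev Torus (L : ℕ) := ZMod L × ZMod L

/-- A configuration of the toy model: one circle-valued spin per site. -/
abbrev Config (L : ℕ) := Torus L → AddCircle (1 : ℝ)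

/-- The two unit coordinate vectors `e₁ = (1,0)` and `e₂ = (0,1)`. -/
def coordVec (L : ℕ) : Fin 2 → Torus L
  | 0 => (1, 0)
  | 1 => (0, 1)

/-- The product of normalized Haar measures on the spins. -/
noncomputable def toyMeasure (L : ℕ) [NeZero L] : Measure (Config L) :=
  Measure.pi fun _ => (AddCircle.haarAddCircle : Measure (AddCircle (1 : ℝ)))

/-- A bond `(x, x + eᵢ)` of the configuration `φ` is `ε`-ordered when
`‖φ x - φ (x + eᵢ)‖ ≤ ε/2`, where `‖·‖` is the quotient norm on `ℝ/ℤ`. -/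
def IsOrderedBond (L : ℕ) [NeZero L] (ε : ℝ) (φ : Config L) (x : Torus L) (i : Fin 2) : Prop :=
  ‖φ x - φ (x + coordVec L i)‖ ≤ ε / 2

noncomputable instance (L : ℕ) [NeZero L] (ε : ℝ) (φ : Config L) (x : Torus L) (i : Fin 2) :
    Decidable (IsOrderedBond L ε φ x i) :=
  Real.decidableLE _ _

/-- The toy Hamiltonian: minus the number of `ε`-ordered bonds. -/
noncomputable def toyH (L : ℕ) [NeZero L] (ε : ℝ) (φ : Config L) : ℝ :=
  -(∑ x : Torus L, ∑ i : Fin 2, if IsOrderedBond L ε φ x i then (1 : ℝ) else 0)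

/-- The toy-model partition function. -/
noncomputable def toyZ (L : ℕ) [NeZero L] (β ε : ℝ) : ℝ :=
  ∫ φ, Real.exp (-β * toyH L ε φ) ∂(toyMeasure L)

/-- The residue `(x₁ + x₂) mod 4` of a site of the torus, well defined when `4 ∣ L`. -/
def residue4 (L : ℕ) (h : (4 : ℕ) ∣ L) (x : Torus L) : ZMod 4 :=
  ZMod.castHom h (ZMod 4) (x.1 + x.2)

/-- A bond `(x, x + eᵢ)` belongs to `E₀₁` iff `(x₁ + x₂) mod 4 ∈ {0, 1}`. -/
def InE01 (L : ℕ) (h : (4 : ℕ) ∣ L) (x : Torus L) : Prop :=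
  residue4 L h x = 0 ∨ residue4 L h x = 1

/-- The chessboard event `A^#`: every bond of `E₀₁` is `ε`-ordered and every bond
of `E₂₃` is `ε`-disordered. -/
def Asharp (L : ℕ) [NeZero L] (h : (4 : ℕ) ∣ L) (ε : ℝ) : Set (Config L) :=
  {φ | ∀ x : Torus L, ∀ i : Fin 2,
    (InE01 L h x → IsOrderedBond L ε φ x i) ∧ (¬ InE01 L h x → ¬ IsOrderedBond L ε φ x i)}

/-- The chessboard-restricted partition function `Z^#`. -/
noncomputable def toyZsharp (L : ℕ) [NeZero L] (h : (4 : ℕ) ∣ L) (β ε : ℝ) : ℝ :=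
  ∫ φ in Asharp L h ε, Real.exp (-β * toyH L ε φ) ∂(toyMeasure L)

/-! ### Auxiliary definitions -/

instance InE01.decidablePred (L : ℕ) (h : (4 : ℕ) ∣ L) : DecidablePred (InE01 L h) :=
  fun x => decidable_of_iff ((residue4 L h x = 0) ∨ (residue4 L h x = 1)) Iff.rfl

/-- ZMod val arithmetic helpers -/
lemma zmod_val_sub_one {L : ℕ} [NeZero L] {u : ZMod L} (hu : u ≠ 0) :
    (u - 1).val = u.val - 1 ∧ 1 ≤ u.val := by
  have hval : 1 ≤ u.val := by
    rcases Nat.eq_zero_or_pos u.val with h | h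
    · exact absurd ((ZMod.val_eq_zero u).mp h) hu
    · omega
  have hLpos : 0 < L := Nat.pos_of_ne_zero (NeZero.ne L)
  have hlt : u.val < L := ZMod.val_lt u
  have hcast : ((u.val : ℕ) : ZMod L) = u := by rw [ZMod.natCast_val, ZMod.cast_id]
  have h1 : u - 1 = ((u.val - 1 : ℕ) : ZMod L) := by
    have : ((u.val - 1 : ℕ) : ZMod L) + 1 = u := by
      rw [show ((u.val - 1 : ℕ) : ZMod L) + 1 = ((u.val - 1 + 1 : ℕ) : ZMod L) by push_cast; ring,
        show u.val - 1 + 1 = u.val by omega, hcast]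
    exact (eq_sub_of_add_eq this).symm
  rw [h1, ZMod.val_natCast_of_lt (by omega)]
  exact ⟨rfl, hval⟩

lemma zmod_val_add_one {L : ℕ} [NeZero L] {u : ZMod L} (hu : u ≠ -1) :
    (u + 1).val = u.val + 1 := by
  have hLpos : 0 < L := Nat.pos_of_ne_zero (NeZero.ne L)
  have hlt : u.val < L := ZMod.val_lt u
  have hcast : ((u.val : ℕ) : ZMod L) = u := by rw [ZMod.natCast_val, ZMod.cast_id]
  have hne : u.val + 1 < L := by
    rcases Nat.lt_or_ge (u.val + 1) L with h | h
    · exact h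
    · exfalso
      apply hu
      have huval : u.val = L - 1 := by omega
      have : ((L - 1 : ℕ) : ZMod L) = -1 := by
        have h1L : 1 ≤ L := hLpos
        push_cast [Nat.cast_sub h1L]
        simp [ZMod.natCast_self]
      rw [← hcast, huval, this]
  have h1 : u + 1 = ((u.val + 1 : ℕ) : ZMod L) := by push_cast [hcast]; ring
  rw [h1, ZMod.val_natCast_of_lt hne]

section Geometry

variable (L : ℕ) [NeZero L] (h4 : (4 : ℕ) ∣ L)

/-- The parent map of the spanning forest used in the chessboard bound. -/
def parentMap (x : Torus L) : Torus L :=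
  if residue4 L h4 x = 0 then x + ((0 : ZMod L), (1 : ZMod L)) else x - ((1 : ZMod L), (0 : ZMod L))

/-- The rank function certifying acyclicity of the forest. -/
def rankMap (x : Torus L) : ℤ := (x.1.val : ℤ) - 2 * (x.2.val : ℤ)

/-- The forest vertex set. -/
def Tset : Finset (Torus L) :=
  Finset.univ.filter fun x =>
    (residue4 L h4 x = 1 ∧ x.1 ≠ 0) ∨ (residue4 L h4 x = 2 ∧ x.1 ≠ 0) ∨
      (residue4 L h4 x = 0 ∧ x.2 ≠ -1)

lemma residue4_sub_e1 (x : Torus L) :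
    residue4 L h4 (x - ((1 : ZMod L), (0 : ZMod L))) = residue4 L h4 x - 1 := by
  unfold residue4
  have : (x - ((1 : ZMod L), (0 : ZMod L))).1 + (x - ((1 : ZMod L), (0 : ZMod L))).2
      = (x.1 + x.2) - 1 := by
    simp [Prod.fst_sub, Prod.snd_sub]; ring
  rw [this, map_sub, map_one]

lemma rank_parent_lt (x : Torus L) (hx : x ∈ Tset L h4) :
    rankMap L (parentMap L h4 x) < rankMap L x := by
  have hx' := Finset.mem_filter.mp hx
  rcases hx'.2 with ⟨hr, h1⟩ | ⟨hr, h1⟩ | ⟨hr, h2⟩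
  · -- residue 1
    have hne : residue4 L h4 x ≠ 0 := by rw [hr]; decide
    unfold parentMap rankMap
    rw [if_neg hne]
    obtain ⟨hv, hge⟩ := zmod_val_sub_one h1
    simp only [Prod.fst_sub, Prod.snd_sub, sub_zero]
    rw [hv]
    omega
  · -- residue 2
    have hne : residue4 L h4 x ≠ 0 := by rw [hr]; decide
    unfold parentMap rankMap
    rw [if_neg hne]
    obtain ⟨hv, hge⟩ := zmod_val_sub_one h1
    simp only [Prod.fst_sub, Prod.snd_sub, sub_zero]
    rw [hv]
    omega
  · -- residue 0
    unfold parentMap rankMap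
    rw [if_pos hr]
    simp only [Prod.fst_add, Prod.snd_add, add_zero]
    rw [zmod_val_add_one h2]
    omega

lemma asharp_constraint {ε : ℝ} {φ : Config L} (hφ : φ ∈ Asharp L h4 ε)
    (x : Torus L) (hx : x ∈ Tset L h4) :
    ‖φ x - φ (parentMap L h4 x)‖ ≤ ε / 2 := by
  have hx' := Finset.mem_filter.mp hx
  have he1 : coordVec L 0 = ((1 : ZMod L), (0 : ZMod L)) := rfl
  have he2 : coordVec L 1 = ((0 : ZMod L), (1 : ZMod L)) := rfl
  rcases hx'.2 with ⟨hr, _⟩ | ⟨hr, _⟩ | ⟨hr, _⟩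
  · -- residue 1: parent is x - e₁, bond from x - e₁ (residue 0)
    have hne : residue4 L h4 x ≠ 0 := by rw [hr]; decide
    have hpar : parentMap L h4 x = x - ((1 : ZMod L), (0 : ZMod L)) := if_neg hne
    set w := x - ((1 : ZMod L), (0 : ZMod L)) with hw
    have hresw : residue4 L h4 w = 0 := by rw [hw, residue4_sub_e1, hr]; decide
    have hord : IsOrderedBond L ε φ w 0 := (hφ w 0).1 (Or.inl hresw)
    unfold IsOrderedBond at hord
    rw [he1] at hord
    have hwx : w + ((1 : ZMod L), (0 : ZMod L)) = x := by rw [hw]; ring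
    rw [hwx] at hord
    rw [hpar, norm_sub_rev]
    exact hord
  · -- residue 2: parent is x - e₁ (residue 1)
    have hne : residue4 L h4 x ≠ 0 := by rw [hr]; decide
    have hpar : parentMap L h4 x = x - ((1 : ZMod L), (0 : ZMod L)) := if_neg hne
    set w := x - ((1 : ZMod L), (0 : ZMod L)) with hw
    have hresw : residue4 L h4 w = 1 := by rw [hw, residue4_sub_e1, hr]; decide
    have hord : IsOrderedBond L ε φ w 0 := (hφ w 0).1 (Or.inr hresw)
    unfold IsOrderedBond at hord
    rw [he1] at hord
    have hwx : w + ((1 : ZMod L), (0 : ZMod L)) = x := by rw [hw]; ring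
    rw [hwx] at hord
    rw [hpar, norm_sub_rev]
    exact hord
  · -- residue 0: parent is x + e₂
    have hpar : parentMap L h4 x = x + ((0 : ZMod L), (1 : ZMod L)) := if_pos hr
    have hord : IsOrderedBond L ε φ x 1 := (hφ x 1).1 (Or.inl hr)
    unfold IsOrderedBond at hord
    rw [he2] at hord
    rw [hpar]
    exact hord

end Geometry

/-! ### Counting -/


lemma card_filter_equiv {α β : Type*} [Fintype α] [Fintype β] [DecidableEq α] [DecidableEq β]
    (e : α ≃ β) (P : β → Prop) [DecidablePred P] :
    (Finset.univ.filter fun x : α => P (e x)).card = (Finset.univ.filter P).card := by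
  simp only [← Fintype.card_subtype]
  exact Fintype.card_congr (e.subtypeEquiv fun a => Iff.rfl)

section Counting
variable (L : ℕ) [NeZero L] (h4 : (4:ℕ) ∣ L)

lemma fiber_card (r : ZMod 4) :
    (Finset.univ.filter fun u : ZMod L => ZMod.castHom h4 (ZMod 4) u = r).card = L / 4 := by
  have hcast : ∀ r : ZMod 4, ZMod.castHom h4 (ZMod 4) ((r.val : ZMod L)) = r := by
    intro r
    simp [map_natCast, ZMod.natCast_val, ZMod.cast_id]
  have key : ∀ r : ZMod 4,
      (Finset.univ.filter fun u : ZMod L => ZMod.castHom h4 (ZMod 4) u = r).card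
      = (Finset.univ.filter fun u : ZMod L => ZMod.castHom h4 (ZMod 4) u = 0).card := by
    intro r
    refine Finset.card_nbij' (fun u => u - (r.val : ZMod L)) (fun u => u + (r.val : ZMod L))
      ?_ ?_ ?_ ?_
    · intro u hu
      simp only [Finset.mem_coe, Finset.mem_filter, Finset.mem_univ, true_and] at hu ⊢
      rw [map_sub, hu, hcast, sub_self]
    · intro u hu
      simp only [Finset.mem_coe, Finset.mem_filter, Finset.mem_univ, true_and] at hu ⊢
      rw [map_add, hu, hcast, zero_add]
    · intro u _; ring
    · intro u _; ring
  have hsum : ∑ r : ZMod 4,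
      (Finset.univ.filter fun u : ZMod L => ZMod.castHom h4 (ZMod 4) u = r).card = L := by
    rw [← Finset.card_eq_sum_card_fiberwise (f := ZMod.castHom h4 (ZMod 4))
      (t := Finset.univ) (fun x _ => Finset.mem_univ _)]
    simp [ZMod.card]
  have h4' : ∑ r : ZMod 4, (Finset.univ.filter
      fun u : ZMod L => ZMod.castHom h4 (ZMod 4) u = r).card
      = 4 * (Finset.univ.filter fun u : ZMod L => ZMod.castHom h4 (ZMod 4) u = 0).card := by
    rw [Finset.sum_congr rfl fun r _ => key r, Finset.sum_const]
    simp [ZMod.card]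
  rw [key r]
  obtain ⟨m, rfl⟩ := h4
  omega

lemma count_res_and (e : Torus L ≃ Torus L) (P : Torus L → Prop) [DecidablePred P] (r : ZMod 4)
    (R : ZMod L → Prop) [DecidablePred R]
    (hePQ : ∀ x, P x ↔ (ZMod.castHom h4 (ZMod 4) (e x).1 = r ∧ R (e x).2)) :
    (Finset.univ.filter P).card = (L / 4) * (Finset.univ.filter R).card := by
  have h1 : (Finset.univ.filter P)
      = (Finset.univ.filter fun x : Torus L =>
          (ZMod.castHom h4 (ZMod 4) (e x).1 = r ∧ R (e x).2)) := by
    apply Finset.filter_congr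
    intro x _
    exact (by simpa using hePQ x)
  rw [h1, card_filter_equiv e (fun y : Torus L => ZMod.castHom h4 (ZMod 4) y.1 = r ∧ R y.2)]
  rw [show (Finset.univ : Finset (Torus L)) = Finset.univ ×ˢ Finset.univ from
    (Finset.univ_product_univ).symm]
  rw [Finset.filter_product (fun u : ZMod L => ZMod.castHom h4 (ZMod 4) u = r) R,
    Finset.card_product, fiber_card L h4 r]

lemma count_val_le (k : ℕ) (hk : k < L) :
    (Finset.univ.filter fun j : ZMod L => j.val ≤ k).card = k + 1 := by
  rw [show k + 1 = (Finset.range (k+1)).card from (Finset.card_range _).symm]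
  refine Finset.card_nbij' (fun j => j.val) (fun n => (n : ZMod L)) ?_ ?_ ?_ ?_
  · intro j hj
    simp only [Finset.mem_coe, Finset.mem_filter, Finset.mem_univ, true_and] at hj
    simp [Finset.mem_range]; omega
  · intro n hn
    simp only [Finset.mem_range, Finset.mem_coe] at hn
    simp only [Finset.mem_filter, Finset.mem_univ, true_and, Finset.mem_coe]
    rw [ZMod.val_natCast_of_lt (by omega)]
    omega
  · intro j _
    simp [ZMod.natCast_val, ZMod.cast_id]
  · intro n hn
    simp only [Finset.mem_range, Finset.mem_coe] at hn
    show (((n:ℕ) : ZMod L)).val = n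
    exact ZMod.val_natCast_of_lt (by omega)

end Counting

section Counts
variable (L : ℕ) [NeZero L] (h4 : (4 : ℕ) ∣ L)

/-- shear equivalence fixing the second coordinate relation -/
def shearA : Torus L ≃ Torus L where
  toFun x := (x.1 + x.2, x.1)
  invFun y := (y.2, y.1 - y.2)
  left_inv x := by simp
  right_inv y := by simp

def shearB : Torus L ≃ Torus L where
  toFun x := (x.1 + x.2, x.2)
  invFun y := (y.1 - y.2, y.2)
  left_inv x := by simp
  right_inv y := by simp

lemma card_ne_zero_zmod : (Finset.univ.filter fun u : ZMod L => u ≠ (0:ZMod L)).card = L - 1 := by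
  rw [Finset.filter_ne', Finset.card_erase_of_mem (Finset.mem_univ _), Finset.card_univ,
    ZMod.card]

lemma card_ne_neg_one_zmod :
    (Finset.univ.filter fun u : ZMod L => u ≠ (-1:ZMod L)).card = L - 1 := by
  rw [Finset.filter_ne', Finset.card_erase_of_mem (Finset.mem_univ _), Finset.card_univ,
    ZMod.card]

lemma card_res (r : ZMod 4) :
    (Finset.univ.filter fun x : Torus L => residue4 L h4 x = r).card = L / 4 * L := by
  rw [count_res_and L h4 (shearB L) _ r (fun _ => True) (fun x => by
    simp only [shearB, Equiv.coe_fn_mk, and_true]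
    exact Iff.rfl)]
  congr 1
  rw [Finset.filter_true_of_mem (fun _ _ => trivial), Finset.card_univ, ZMod.card]

lemma card_res_fst (r : ZMod 4) :
    (Finset.univ.filter fun x : Torus L => residue4 L h4 x = r ∧ x.1 ≠ 0).card
      = L / 4 * (L - 1) := by
  rw [count_res_and L h4 (shearA L) _ r (fun u => u ≠ 0) (fun x => by
    simp only [shearA, Equiv.coe_fn_mk]
    exact Iff.rfl), card_ne_zero_zmod]

lemma card_res_snd (r : ZMod 4) :
    (Finset.univ.filter fun x : Torus L => residue4 L h4 x = r ∧ x.2 ≠ -1).card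
      = L / 4 * (L - 1) := by
  rw [count_res_and L h4 (shearB L) _ r (fun u => u ≠ -1) (fun x => by
    simp only [shearB, Equiv.coe_fn_mk]
    exact Iff.rfl), card_ne_neg_one_zmod]

lemma card_Tset : (Tset L h4).card = 3 * (L / 4 * (L - 1)) := by
  classical
  have hd1 : Disjoint
      (Finset.univ.filter fun x : Torus L => residue4 L h4 x = 2 ∧ x.1 ≠ 0)
      (Finset.univ.filter fun x : Torus L => residue4 L h4 x = 0 ∧ x.2 ≠ -1) := by
    rw [Finset.disjoint_left]
    intro a ha hb
    have h1 := (Finset.mem_filter.mp ha).2.1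
    have h2 := (Finset.mem_filter.mp hb).2.1
    rw [h1] at h2
    exact absurd h2 (by decide)
  have hd2 : Disjoint
      (Finset.univ.filter fun x : Torus L => residue4 L h4 x = 1 ∧ x.1 ≠ 0)
      ((Finset.univ.filter fun x : Torus L => residue4 L h4 x = 2 ∧ x.1 ≠ 0)
        ∪ (Finset.univ.filter fun x : Torus L => residue4 L h4 x = 0 ∧ x.2 ≠ -1)) := by
    rw [Finset.disjoint_left]
    intro a ha hb
    have h1 := (Finset.mem_filter.mp ha).2.1
    rcases Finset.mem_union.mp hb with h | h
    · have h2 := (Finset.mem_filter.mp h).2.1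
      rw [h1] at h2
      exact absurd h2 (by decide)
    · have h2 := (Finset.mem_filter.mp h).2.1
      rw [h1] at h2
      exact absurd h2 (by decide)
  unfold Tset
  rw [Finset.filter_or, Finset.filter_or, Finset.card_union_of_disjoint hd2,
    Finset.card_union_of_disjoint hd1,
    card_res_fst L h4 1, card_res_fst L h4 2, card_res_snd L h4 0]
  ring

lemma card_InE01 : (Finset.univ.filter (InE01 L h4)).card = 2 * (L / 4 * L) := by
  classical
  have hd : Disjoint
      (Finset.univ.filter fun x : Torus L => residue4 L h4 x = 0)
      (Finset.univ.filter fun x : Torus L => residue4 L h4 x = 1) := by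
    rw [Finset.disjoint_left]
    intro a ha hb
    have h1 := (Finset.mem_filter.mp ha).2
    have h2 := (Finset.mem_filter.mp hb).2
    rw [h1] at h2
    exact absurd h2 (by decide)
  have hsplit : Finset.univ.filter (InE01 L h4)
      = (Finset.univ.filter fun x : Torus L => residue4 L h4 x = 0)
        ∪ (Finset.univ.filter fun x : Torus L => residue4 L h4 x = 1) := by
    rw [← Finset.filter_or]
    exact Finset.filter_congr fun x _ => Iff.rfl
  rw [hsplit, Finset.card_union_of_disjoint hd, card_res L h4 0, card_res L h4 1]
  ring

lemma card_band (k : ℕ) (hk : k < L) :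
    (Finset.univ.filter fun x : Torus L => x.2.val ≤ k).card = L * (k + 1) := by
  rw [show (Finset.univ : Finset (Torus L)) = Finset.univ ×ˢ Finset.univ from
    (Finset.univ_product_univ).symm,
    Finset.filter_product_right (fun u : ZMod L => u.val ≤ k),
    Finset.card_product, Finset.card_univ, ZMod.card, count_val_le L k hk]

end Counts

open scoped ENNReal

/-! ### Forest bound -/

lemma forest_bound {ι : Type*} [Fintype ι] [DecidableEq ι]
    {α : Type*} [MeasurableSpace α] [Nonempty α] (μ : Measure α) [IsProbabilityMeasure μ]
    (p : ι → ι) (rk : ι → ℤ) (ε : ℝ≥0∞) (hε : ε ≠ ⊤)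
    (C : ι → α → α → Prop) [∀ z a b, Decidable (C z a b)]
    (hmeas : ∀ z, MeasurableSet {q : α × α | C z q.1 q.2})
    (hbound : ∀ z b, μ {v | C z v b} ≤ ε)
    (T : Finset ι) (hrk : ∀ z ∈ T, rk (p z) < rk z) :
    ∫⁻ φ, (∏ z ∈ T, if C z (φ z) (φ (p z)) then 1 else 0) ∂(Measure.pi fun _ => μ)
      ≤ ε ^ T.card := by
  have hsetmeas : ∀ z : ι, MeasurableSet {φ : ι → α | C z (φ z) (φ (p z))} := by
    intro z
    have : Measurable fun φ : ι → α => (φ z, φ (p z)) :=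
      (measurable_pi_apply z).prodMk (measurable_pi_apply (p z))
    exact this (hmeas z)
  have hfac : ∀ z : ι, Measurable fun φ : ι → α =>
      (if C z (φ z) (φ (p z)) then (1:ℝ≥0∞) else 0) := by
    intro z
    exact Measurable.ite (hsetmeas z) measurable_const measurable_const
  have hprodmeas : ∀ S : Finset ι, Measurable fun φ : ι → α =>
      ∏ z ∈ S, if C z (φ z) (φ (p z)) then (1:ℝ≥0∞) else 0 := by
    intro S
    exact Finset.measurable_prod _ fun z _ => hfac z
  obtain ⟨x₀⟩ : Nonempty (ι → α) := inferInstance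
  have indep : ∀ (f : (ι → α) → ℝ≥0∞) (y : ι), Measurable f →
      (∀ x v, f (Function.update x y v) = f x) →
      (∫⋯∫⁻_Finset.univ, f ∂(fun _ => μ)) x₀
        = (∫⋯∫⁻_(Finset.univ.erase y), f ∂(fun _ => μ)) x₀ := by
    intro f y hf hupd
    rw [lmarginal_erase' _ hf (Finset.mem_univ y)]
    refine congrFun (congrArg _ (funext fun x => ?_)) x₀
    simp_rw [hupd]
    simp
  revert hrk
  induction T using Finset.strongInduction with
  | _ T ih =>
    intro hrk
    rcases T.eq_empty_or_nonempty with rfl | hne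
    · simp
    · obtain ⟨y, hy, hymax⟩ := T.exists_max_image rk hne
      have hpy : p y ≠ y := fun h => absurd (h ▸ hrk y hy) (lt_irrefl _)
      have hkey : ∀ z ∈ T.erase y, z ≠ y ∧ p z ≠ y := by
        intro z hz
        have hz' := Finset.mem_erase.mp hz
        refine ⟨hz'.1, fun h => ?_⟩
        have h1 : rk (p z) < rk z := hrk z hz'.2
        have h2 : rk z ≤ rk y := hymax z hz'.2
        rw [h] at h1; omega
      set G : (ι → α) → ℝ≥0∞ :=
        fun φ => ∏ z ∈ T.erase y, if C z (φ z) (φ (p z)) then (1:ℝ≥0∞) else 0 with hG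
      set F : (ι → α) → ℝ≥0∞ :=
        fun φ => ∏ z ∈ T, if C z (φ z) (φ (p z)) then (1:ℝ≥0∞) else 0 with hF
      have hFG : ∀ φ, F φ = (if C y (φ y) (φ (p y)) then (1:ℝ≥0∞) else 0) * G φ := by
        intro φ
        rw [hF, hG]
        exact (Finset.mul_prod_erase T _ hy).symm
      have hGupd : ∀ (x : ι → α) (v : α), G (Function.update x y v) = G x := by
        intro x v
        apply Finset.prod_congr rfl
        intro z hz
        rw [Function.update_of_ne (hkey z hz).1, Function.update_of_ne (hkey z hz).2]
      have hGmeas : Measurable G := hprodmeas _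
      have hGle : ∀ x, G x ≤ 1 := by
        intro x
        exact Finset.prod_le_one (fun _ _ => zero_le) (fun z _ => by split <;> simp)
      have hμs : ∀ b : α, ∫⁻ v, (if C y v b then (1:ℝ≥0∞) else 0) ∂μ ≤ ε := by
        intro b
        have h1 : (fun v => if C y v b then (1:ℝ≥0∞) else 0)
            = Set.indicator {v | C y v b} (fun _ => 1) := by
          ext v; simp [Set.indicator_apply]
        have h2 : MeasurableSet {v | C y v b} := by
          have : Measurable fun v : α => (v, b) := measurable_id.prodMk measurable_const
          exact this (hmeas y)
        rw [h1]
        exact le_trans (le_of_eq (lintegral_indicator_one h2)) (hbound y b)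
      calc ∫⁻ φ, F φ ∂(Measure.pi fun _ => μ)
          = (∫⋯∫⁻_Finset.univ, F ∂(fun _ => μ)) x₀ := lintegral_eq_lmarginal_univ x₀
        _ = (∫⋯∫⁻_(Finset.univ.erase y),
              (fun x => ∫⁻ v, F (Function.update x y v) ∂μ) ∂(fun _ => μ)) x₀ := by
            rw [lmarginal_erase' _ (hprodmeas T) (Finset.mem_univ y)]
        _ ≤ (∫⋯∫⁻_(Finset.univ.erase y), (fun x => ε * G x) ∂(fun _ => μ)) x₀ := by
            apply lmarginal_mono
            intro x
            have hup : ∀ v, F (Function.update x y v)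
                = (if C y v (x (p y)) then (1:ℝ≥0∞) else 0) * G x := by
              intro v
              rw [hFG, hGupd, Function.update_self, Function.update_of_ne hpy]
            simp only [hup]
            rw [lintegral_mul_const' _ _ (ne_top_of_le_ne_top (by simp) (hGle x))]
            exact mul_le_mul_left (hμs (x (p y))) (G x)
        _ = ε * (∫⋯∫⁻_(Finset.univ.erase y), G ∂(fun _ => μ)) x₀ := by
            simp only [lmarginal]
            exact lintegral_const_mul' _ _ hε
        _ = ε * (∫⋯∫⁻_Finset.univ, G ∂(fun _ => μ)) x₀ := by
            rw [indep G y hGmeas hGupd]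
        _ ≤ ε * ε ^ (T.erase y).card := by
            gcongr
            rw [← lintegral_eq_lmarginal_univ x₀]
            exact ih (T.erase y) (Finset.erase_ssubset hy)
              (fun z hz => hrk z (Finset.mem_erase.mp hz).2)
        _ = ε ^ T.card := by
            rw [Finset.card_erase_of_mem hy, ← pow_succ']
            congr 1
            have := Finset.card_pos.mpr hne
            omega

/-! ### Measure estimates -/

lemma haar_ball_eq (r : ℝ) (b : AddCircle (1:ℝ)) (h0 : 0 ≤ r) (h1 : 2 * r ≤ 1) :
    (AddCircle.haarAddCircle : Measure (AddCircle (1:ℝ))) (Metric.closedBall b r)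
      = ENNReal.ofReal (2 * r) := by
  rw [show (AddCircle.haarAddCircle : Measure (AddCircle (1:ℝ))) = volume by
    rw [AddCircle.volume_eq_smul_haarAddCircle]; simp]
  rw [AddCircle.volume_closedBall]
  congr 1
  exact min_eq_right h1

section MeasureEstimates

variable (L : ℕ) [NeZero L] (h4 : (4 : ℕ) ∣ L)

lemma measurable_ordered (ε : ℝ) (x : Torus L) (i : Fin 2) :
    MeasurableSet {φ : Config L | IsOrderedBond L ε φ x i} := by
  have hm : Measurable fun φ : Config L => ‖φ x - φ (x + coordVec L i)‖ :=
    ((measurable_pi_apply x).sub (measurable_pi_apply (x + coordVec L i))).norm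
  exact hm measurableSet_Iic

lemma measurable_asharp (ε : ℝ) : MeasurableSet (Asharp L h4 ε) := by
  have : Asharp L h4 ε = ⋂ (x : Torus L) (i : Fin 2),
      ((if InE01 L h4 x then {φ : Config L | IsOrderedBond L ε φ x i}
        else {φ : Config L | IsOrderedBond L ε φ x i}ᶜ)) := by
    ext φ
    simp only [Set.mem_iInter, Asharp, Set.mem_setOf_eq]
    constructor
    · intro h x i
      by_cases hx : InE01 L h4 x
      · rw [if_pos hx]; exact (h x i).1 hx
      · rw [if_neg hx]; exact (h x i).2 hx
    · intro h x i
      constructor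
      · intro hx
        have := h x i; rwa [if_pos hx] at this
      · intro hx
        have := h x i; rw [if_neg hx] at this; exact this
  rw [this]
  refine MeasurableSet.iInter fun x => MeasurableSet.iInter fun i => ?_
  split
  · exact measurable_ordered L ε x i
  · exact (measurable_ordered L ε x i).compl

lemma measurable_toyH (ε : ℝ) : Measurable (toyH L ε) := by
  unfold toyH
  apply Measurable.neg
  apply Finset.measurable_sum
  intro x _
  apply Finset.measurable_sum
  intro i _
  exact Measurable.ite (measurable_ordered L ε x i) measurable_const measurable_const

lemma asharp_measure_le {ε : ℝ} (hε0 : 0 < ε) (hε1 : ε ≤ 1) :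
    toyMeasure L (Asharp L h4 ε) ≤ ENNReal.ofReal ε ^ (Tset L h4).card := by
  classical
  have hb : ∀ b : AddCircle (1:ℝ),
      (AddCircle.haarAddCircle : Measure (AddCircle (1:ℝ))) {v | ‖v - b‖ ≤ ε / 2}
        ≤ ENNReal.ofReal ε := by
    intro b
    have hset : {v : AddCircle (1:ℝ) | ‖v - b‖ ≤ ε / 2} = Metric.closedBall b (ε/2) := by
      ext v
      rw [Metric.mem_closedBall, dist_eq_norm_sub]
      rfl
    rw [hset, haar_ball_eq (ε/2) b (by linarith) (by linarith)]
    exact le_of_eq (by congr 1; ring)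
  have hbound := forest_bound (ι := Torus L) (α := AddCircle (1:ℝ))
    AddCircle.haarAddCircle (parentMap L h4) (rankMap L) (ENNReal.ofReal ε)
    ENNReal.ofReal_ne_top (fun _ a b => ‖a - b‖ ≤ ε / 2)
    (fun z => by
      have : Measurable fun q : AddCircle (1:ℝ) × AddCircle (1:ℝ) => ‖q.1 - q.2‖ :=
        (measurable_fst.sub measurable_snd).norm
      exact this measurableSet_Iic)
    (fun z b => hb b)
    (Tset L h4) (fun z hz => rank_parent_lt L h4 z hz)
  have hind : ∀ φ : Config L, (Asharp L h4 ε).indicator (fun _ => (1:ℝ≥0∞)) φ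
      ≤ ∏ z ∈ Tset L h4,
        if ‖φ z - φ (parentMap L h4 z)‖ ≤ ε / 2 then (1:ℝ≥0∞) else 0 := by
    intro φ
    by_cases hφ : φ ∈ Asharp L h4 ε
    · rw [Set.indicator_of_mem hφ]
      rw [Finset.prod_congr rfl (fun z hz => if_pos (asharp_constraint L h4 hφ z hz))]
      simp
    · rw [Set.indicator_of_notMem hφ]
      exact zero_le
  calc toyMeasure L (Asharp L h4 ε)
      = ∫⁻ φ, (Asharp L h4 ε).indicator (fun _ => (1:ℝ≥0∞)) φ ∂(toyMeasure L) :=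
        (lintegral_indicator_one (measurable_asharp L h4 ε)).symm
    _ ≤ ∫⁻ φ, (∏ z ∈ Tset L h4,
          if ‖φ z - φ (parentMap L h4 z)‖ ≤ ε / 2 then (1:ℝ≥0∞) else 0) ∂(toyMeasure L) :=
        lintegral_mono hind
    _ ≤ ENNReal.ofReal ε ^ (Tset L h4).card := hbound

end MeasureEstimates

/-! ### Integral estimates -/

lemma zmod_val_neg_one (L : ℕ) [NeZero L] : ((-1 : ZMod L)).val = L - 1 := by
  have hLpos : 0 < L := Nat.pos_of_ne_zero (NeZero.ne L)
  have h1 : ((L - 1 : ℕ) : ZMod L) = -1 := by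
    push_cast [Nat.cast_sub (by omega : 1 ≤ L)]
    simp [ZMod.natCast_self]
  rw [← h1, ZMod.val_natCast_of_lt (by omega)]

section IntegralEstimates

variable (L : ℕ) [NeZero L] (h4 : (4 : ℕ) ∣ L)

/-- the number of ordered bonds, as a real-valued function -/
noncomputable def orderedCount (ε : ℝ) (φ : Config L) : ℝ :=
  ∑ x : Torus L, ∑ i : Fin 2, if IsOrderedBond L ε φ x i then (1 : ℝ) else 0

lemma toyH_eq (ε : ℝ) (φ : Config L) : toyH L ε φ = -(orderedCount L ε φ) := rfl

lemma orderedCount_le (ε : ℝ) (φ : Config L) :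
    orderedCount L ε φ ≤ 2 * (L : ℝ)^2 := by
  unfold orderedCount
  calc ∑ x : Torus L, ∑ i : Fin 2, (if IsOrderedBond L ε φ x i then (1 : ℝ) else 0)
      ≤ ∑ x : Torus L, ∑ i : Fin 2, (1 : ℝ) := by
        apply Finset.sum_le_sum
        intro x _
        apply Finset.sum_le_sum
        intro i _
        split <;> norm_num
    _ = 2 * (L : ℝ)^2 := by
        simp [Finset.sum_const, Finset.card_univ, ZMod.card]
        ring

lemma orderedCount_nonneg (ε : ℝ) (φ : Config L) : 0 ≤ orderedCount L ε φ := by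
  unfold orderedCount
  apply Finset.sum_nonneg
  intro x _
  apply Finset.sum_nonneg
  intro i _
  split <;> norm_num

instance toyMeasure_prob (L : ℕ) [NeZero L] : IsProbabilityMeasure (toyMeasure L) := by
  unfold toyMeasure
  infer_instance

lemma integrable_exp_toyH (β ε : ℝ) (hβ : 0 ≤ β) :
    Integrable (fun φ => Real.exp (-β * toyH L ε φ)) (toyMeasure L) := by
  have hmeas : Measurable fun φ => Real.exp (-β * toyH L ε φ) :=
    (Real.continuous_exp.measurable).comp ((measurable_toyH L ε).const_mul (-β))
  apply Integrable.mono' (g := fun _ => Real.exp (β * (2 * (L:ℝ)^2)))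
    (integrable_const _) hmeas.aestronglyMeasurable
  apply Filter.Eventually.of_forall
  intro φ
  rw [Real.norm_eq_abs, abs_of_pos (Real.exp_pos _)]
  apply Real.exp_le_exp.mpr
  rw [toyH_eq]
  have := orderedCount_le L ε φ
  have := orderedCount_nonneg L ε φ
  nlinarith

lemma orderedCount_on_asharp (ε : ℝ) {φ : Config L} (hφ : φ ∈ Asharp L h4 ε) :
    orderedCount L ε φ = 2 * ((Finset.univ.filter (InE01 L h4)).card : ℝ) := by
  classical
  unfold orderedCount
  have hstep : ∀ x : Torus L, ∀ i : Fin 2,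
      (if IsOrderedBond L ε φ x i then (1:ℝ) else 0)
        = (if InE01 L h4 x then (1:ℝ) else 0) := by
    intro x i
    by_cases hx : InE01 L h4 x
    · rw [if_pos hx, if_pos ((hφ x i).1 hx)]
    · rw [if_neg hx, if_neg ((hφ x i).2 hx)]
  calc ∑ x : Torus L, ∑ i : Fin 2, (if IsOrderedBond L ε φ x i then (1:ℝ) else 0)
      = ∑ x : Torus L, ∑ _i : Fin 2, (if InE01 L h4 x then (1:ℝ) else 0) :=
        Finset.sum_congr rfl fun x _ => Finset.sum_congr rfl fun i _ => hstep x i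
    _ = ∑ x : Torus L, 2 * (if InE01 L h4 x then (1:ℝ) else 0) := by
        apply Finset.sum_congr rfl
        intro x _
        simp [Finset.sum_const]
    _ = 2 * ∑ x : Torus L, (if InE01 L h4 x then (1:ℝ) else 0) := by
        rw [Finset.mul_sum]
    _ = 2 * ((Finset.univ.filter (InE01 L h4)).card : ℝ) := by
        rw [Finset.sum_boole]

/-- The ordered band event used for the lower bound on `Z`. -/
def bandSet (ε : ℝ) : Set (Config L) :=
  Set.univ.pi fun x : Torus L =>
    if x.2.val ≤ L / 2 then Metric.closedBall (0 : AddCircle (1:ℝ)) (ε/4) else Set.univ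

lemma measurable_bandSet (ε : ℝ) : MeasurableSet (bandSet L ε) := by
  apply MeasurableSet.univ_pi
  intro x
  split
  · exact Metric.isClosed_closedBall.measurableSet
  · exact MeasurableSet.univ

lemma band_measure {ε : ℝ} (hε0 : 0 < ε) (hε1 : ε ≤ 1) :
    toyMeasure L (bandSet L ε) = ENNReal.ofReal (ε/2) ^ (L * (L / 2 + 1)) := by
  classical
  unfold bandSet toyMeasure
  rw [Measure.pi_pi]
  have hball : (AddCircle.haarAddCircle : Measure (AddCircle (1:ℝ)))
      (Metric.closedBall (0 : AddCircle (1:ℝ)) (ε/4)) = ENNReal.ofReal (ε/2) := by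
    rw [haar_ball_eq (ε/4) 0 (by linarith) (by linarith)]
    congr 1
    ring
  calc ∏ x : Torus L, (AddCircle.haarAddCircle : Measure (AddCircle (1:ℝ)))
        (if x.2.val ≤ L / 2 then Metric.closedBall (0 : AddCircle (1:ℝ)) (ε/4) else Set.univ)
      = ∏ x : Torus L, (if x.2.val ≤ L / 2 then ENNReal.ofReal (ε/2) else 1) := by
        apply Finset.prod_congr rfl
        intro x _
        split
        · exact hball
        · simp
    _ = ENNReal.ofReal (ε/2) ^ (L * (L / 2 + 1)) := by
        rw [Finset.prod_ite (f := fun _ => ENNReal.ofReal (ε/2)) (g := fun _ => (1:ℝ≥0∞))]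
        rw [Finset.prod_const, Finset.prod_const, one_pow, mul_one]
        congr 1
        exact card_band L (L/2) (Nat.div_lt_self (Nat.pos_of_ne_zero (NeZero.ne L)) one_lt_two)

lemma band_ordered {ε : ℝ} (hε0 : 0 < ε) {φ : Config L} (hφ : φ ∈ bandSet L ε)
    (x : Torus L) (i : Fin 2) (hx : x.2.val + 1 ≤ L / 2) :
    IsOrderedBond L ε φ x i := by
  have hLpos : 0 < L := Nat.pos_of_ne_zero (NeZero.ne L)
  have hhalf : L / 2 < L := Nat.div_lt_self hLpos one_lt_two
  have hmem : ∀ z : Torus L, z.2.val ≤ L / 2 → ‖φ z‖ ≤ ε / 4 := by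
    intro z hz
    have h0 := hφ z (Set.mem_univ z)
    have h1 : φ z ∈ (if z.2.val ≤ L / 2 then
        Metric.closedBall (0 : AddCircle (1:ℝ)) (ε/4) else Set.univ) := h0
    rw [if_pos hz] at h1
    rwa [Metric.mem_closedBall, dist_zero_right] at h1
  have h1 : ‖φ x‖ ≤ ε / 4 := hmem x (by omega)
  have h2 : ‖φ (x + coordVec L i)‖ ≤ ε / 4 := by
    apply hmem
    fin_cases i
    · show (x + ((1 : ZMod L), (0 : ZMod L))).2.val ≤ L / 2
      simp only [Prod.snd_add, add_zero]
      omega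
    · show (x + ((0 : ZMod L), (1 : ZMod L))).2.val ≤ L / 2
      simp only [Prod.snd_add]
      have hne : x.2 ≠ -1 := by
        intro h
        rw [h, zmod_val_neg_one] at hx
        omega
      rw [zmod_val_add_one hne]
      omega
  unfold IsOrderedBond
  calc ‖φ x - φ (x + coordVec L i)‖ ≤ ‖φ x‖ + ‖φ (x + coordVec L i)‖ := norm_sub_le _ _
    _ ≤ ε / 2 := by linarith

lemma orderedCount_on_band {ε : ℝ} (hε0 : 0 < ε) (hL : 4 ≤ L) {φ : Config L}
    (hφ : φ ∈ bandSet L ε) :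
    ((2 * (L * (L / 2)) : ℕ) : ℝ) ≤ orderedCount L ε φ := by
  classical
  have hL2 : 1 ≤ L / 2 := by omega
  have hcount : (Finset.univ.filter fun x : Torus L => x.2.val + 1 ≤ L / 2).card
      = L * (L / 2) := by
    have : (Finset.univ.filter fun x : Torus L => x.2.val + 1 ≤ L / 2)
        = (Finset.univ.filter fun x : Torus L => x.2.val ≤ L / 2 - 1) := by
      apply Finset.filter_congr
      intro x _
      constructor <;> intro h <;> omega
    rw [this, card_band L (L/2 - 1) (by omega)]
    congr 1
    omega
  unfold orderedCount
  have hinner : ∀ x : Torus L,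
      (∑ _i : Fin 2, (if x.2.val + 1 ≤ L / 2 then (1:ℝ) else 0))
        = 2 * (if x.2.val + 1 ≤ L / 2 then (1:ℝ) else 0) := by
    intro x
    rw [Finset.sum_const]
    simp [two_smul]
    norm_num
  have hmain : (∑ x : Torus L, ∑ _i : Fin 2, (if x.2.val + 1 ≤ L / 2 then (1:ℝ) else 0))
      = ((2 * (L * (L / 2)) : ℕ) : ℝ) := by
    rw [Finset.sum_congr rfl fun x _ => hinner x, ← Finset.mul_sum, Finset.sum_boole, hcount]
    push_cast
    ring
  calc ((2 * (L * (L / 2)) : ℕ) : ℝ)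
      = ∑ x : Torus L, ∑ _i : Fin 2, (if x.2.val + 1 ≤ L / 2 then (1:ℝ) else 0) := hmain.symm
    _ ≤ ∑ x : Torus L, ∑ i : Fin 2, (if IsOrderedBond L ε φ x i then (1:ℝ) else 0) := by
        apply Finset.sum_le_sum
        intro x _
        apply Finset.sum_le_sum
        intro i _
        by_cases h : x.2.val + 1 ≤ L / 2
        · rw [if_pos h, if_pos (band_ordered L hε0 hφ x i h)]
        · rw [if_neg h]
          split <;> norm_num

end IntegralEstimates

/-! ### The two sides -/

section ZBounds

variable (L : ℕ) [NeZero L] (h4 : (4 : ℕ) ∣ L)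

lemma toyZsharp_nonneg (β ε : ℝ) : 0 ≤ toyZsharp L h4 β ε := by
  apply setIntegral_nonneg (measurable_asharp L h4 ε)
  intro φ _
  exact (Real.exp_pos _).le

lemma toyZsharp_le {β ε : ℝ} (hβ : 0 ≤ β) (hε0 : 0 < ε) (hε1 : ε ≤ 1) :
    toyZsharp L h4 β ε ≤ ε ^ (Tset L h4).card
      * Real.exp (β * ((2 * (2 * (L / 4 * L)) : ℕ) : ℝ)) := by
  have hconst : Set.EqOn (fun φ => Real.exp (-β * toyH L ε φ))
      (fun _ => Real.exp (β * ((2 * (2 * (L / 4 * L)) : ℕ) : ℝ))) (Asharp L h4 ε) := by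
    intro φ hφ
    simp only
    congr 1
    rw [toyH_eq, orderedCount_on_asharp L h4 ε hφ, card_InE01 L h4]
    push_cast
    ring
  have hμ : (toyMeasure L (Asharp L h4 ε)).toReal ≤ ε ^ (Tset L h4).card := by
    have h1 := asharp_measure_le L h4 hε0 hε1
    have h2 := ENNReal.toReal_mono (ENNReal.pow_ne_top ENNReal.ofReal_ne_top) h1
    rwa [ENNReal.toReal_pow, ENNReal.toReal_ofReal hε0.le] at h2
  calc toyZsharp L h4 β ε
      = ∫ φ in Asharp L h4 ε,
          Real.exp (β * ((2 * (2 * (L / 4 * L)) : ℕ) : ℝ)) ∂(toyMeasure L) :=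
        setIntegral_congr_fun (measurable_asharp L h4 ε) hconst
    _ = (toyMeasure L (Asharp L h4 ε)).toReal
          * Real.exp (β * ((2 * (2 * (L / 4 * L)) : ℕ) : ℝ)) := by
        rw [setIntegral_const]
        rfl
    _ ≤ ε ^ (Tset L h4).card * Real.exp (β * ((2 * (2 * (L / 4 * L)) : ℕ) : ℝ)) :=
        mul_le_mul_of_nonneg_right hμ (Real.exp_pos _).le

lemma toyZ_ge {β ε : ℝ} (hβ : 0 ≤ β) (hε0 : 0 < ε) (hε1 : ε ≤ 1) (hL : 4 ≤ L) :
    (ε/2) ^ (L * (L / 2 + 1)) * Real.exp (β * ((2 * (L * (L / 2)) : ℕ) : ℝ))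
      ≤ toyZ L β ε := by
  have hint := integrable_exp_toyH L β ε hβ
  have hstep1 : ∫ φ in bandSet L ε,
      Real.exp (β * ((2 * (L * (L / 2)) : ℕ) : ℝ)) ∂(toyMeasure L)
      ≤ ∫ φ in bandSet L ε, Real.exp (-β * toyH L ε φ) ∂(toyMeasure L) := by
    apply setIntegral_mono_on (integrable_const _).integrableOn hint.integrableOn
      (measurable_bandSet L ε)
    intro φ hφ
    apply Real.exp_le_exp.mpr
    rw [toyH_eq]
    have := orderedCount_on_band L hε0 hL hφ
    nlinarith
  have hstep2 : ∫ φ in bandSet L ε, Real.exp (-β * toyH L ε φ) ∂(toyMeasure L)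
      ≤ toyZ L β ε := by
    apply setIntegral_le_integral hint
    apply Filter.Eventually.of_forall
    intro φ
    exact (Real.exp_pos _).le
  have hconst : ∫ φ in bandSet L ε,
      Real.exp (β * ((2 * (L * (L / 2)) : ℕ) : ℝ)) ∂(toyMeasure L)
      = (ε/2) ^ (L * (L / 2 + 1)) * Real.exp (β * ((2 * (L * (L / 2)) : ℕ) : ℝ)) := by
    rw [setIntegral_const, Measure.real, band_measure L hε0 hε1, ENNReal.toReal_pow,
      ENNReal.toReal_ofReal (by linarith)]
    rfl
  linarith [hstep1, hstep2, hconst ▸ hstep1]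

lemma toyZ_pos {β ε : ℝ} (hβ : 0 ≤ β) (hε0 : 0 < ε) (hε1 : ε ≤ 1) (hL : 4 ≤ L) :
    0 < toyZ L β ε := by
  calc (0:ℝ) < (ε/2) ^ (L * (L / 2 + 1)) * Real.exp (β * ((2 * (L * (L / 2)) : ℕ) : ℝ)) := by
        positivity
    _ ≤ toyZ L β ε := toyZ_ge L hβ hε0 hε1 hL

end ZBounds

/-- the per-site chessboard estimate
`(Z^#/Z)^{1/L²} ≤ 2·ε^{1/4}·ε^{−c/L}`. -/
theorem toy_Zsharp_ratio_upper_bound :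
    ∃ c : ℝ, 0 ≤ c ∧ ∀ L : ℕ, ∀ hdvd : (4 : ℕ) ∣ L, ∀ hL : 4 ≤ L,
      ∀ ε : ℝ, 0 < ε → ε ≤ 1 / 8 → ∀ β : ℝ, 0 ≤ β →
      haveI : NeZero L := ⟨by omega⟩
      (toyZsharp L hdvd β ε / toyZ L β ε) ^ (((L : ℝ) ^ 2)⁻¹) ≤
        2 * ε ^ ((1 : ℝ) / 4) * ε ^ (-(c / L)) := by
  refine ⟨7/4, by norm_num, ?_⟩
  intro L hdvd hL ε hε0 hε8 β hβ
  haveI : NeZero L := ⟨by omega⟩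
  obtain ⟨m, hm⟩ := id hdvd
  have hm1 : 1 ≤ m := by omega
  have hm0 : (0:ℝ) < (m:ℝ) := by exact_mod_cast hm1
  have hL4 : L / 4 = m := by omega
  have hL2 : L / 2 = 2 * m := by omega
  have hε1 : ε ≤ 1 := by linarith
  -- numeric abbreviations
  set t : ℕ := (Tset L hdvd).card with htdef
  set n : ℕ := L * (L / 2 + 1) with hndef
  have htR : (t : ℝ) = 12 * (m:ℝ)^2 - 3 * m := by
    rw [htdef, card_Tset L hdvd, hL4]
    push_cast [Nat.cast_sub (show 1 ≤ L by omega)]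
    rw [hm]
    push_cast
    ring
  have hnR : (n : ℝ) = 8 * (m:ℝ)^2 + 4 * m := by
    rw [hndef, hL2, hm]
    push_cast
    ring
  have hKsharp : ((2 * (2 * (L / 4 * L)) : ℕ) : ℝ) = 16 * (m:ℝ)^2 := by
    rw [hL4, hm]
    push_cast
    ring
  have hKband : ((2 * (L * (L / 2)) : ℕ) : ℝ) = 16 * (m:ℝ)^2 := by
    rw [hL2, hm]
    push_cast
    ring
  -- bounds on the two partition functions
  have hZs : toyZsharp L hdvd β ε ≤ ε ^ t * Real.exp (β * (16 * (m:ℝ)^2)) := by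
    have := toyZsharp_le L hdvd hβ hε0 hε1
    rwa [hKsharp] at this
  have hZ : (ε/2) ^ n * Real.exp (β * (16 * (m:ℝ)^2)) ≤ toyZ L β ε := by
    have := toyZ_ge L hβ hε0 hε1 hL
    rwa [hKband] at this
  have hZpos : 0 < toyZ L β ε := toyZ_pos L hβ hε0 hε1 hL
  have hBpos : 0 < (ε/2) ^ n * Real.exp (β * (16 * (m:ℝ)^2)) := by positivity
  have hApos : 0 ≤ ε ^ t * Real.exp (β * (16 * (m:ℝ)^2)) := by positivity
  -- the quotient bound
  have hdiv : toyZsharp L hdvd β ε / toyZ L β ε ≤ ε ^ t / (ε/2) ^ n := by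
    have h1 : toyZsharp L hdvd β ε / toyZ L β ε
        ≤ (ε ^ t * Real.exp (β * (16 * (m:ℝ)^2)))
          / ((ε/2) ^ n * Real.exp (β * (16 * (m:ℝ)^2))) :=
      div_le_div₀ hApos hZs hBpos hZ
    rwa [mul_div_mul_right _ _ (Real.exp_ne_zero _)] at h1
  have hx0 : 0 ≤ toyZsharp L hdvd β ε / toyZ L β ε :=
    div_nonneg (toyZsharp_nonneg L hdvd β ε) hZpos.le
  set p : ℝ := ((L : ℝ) ^ 2)⁻¹ with hpdef
  have hp0 : 0 ≤ p := by positivity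
  have hLR : (L : ℝ) = 4 * m := by rw [hm]; push_cast; ring
  have hpval : p = (16 * (m:ℝ)^2)⁻¹ := by
    rw [hpdef, hLR]; ring_nf
  -- rpow both sides
  have hrle : (toyZsharp L hdvd β ε / toyZ L β ε) ^ p ≤ (ε ^ t / (ε/2) ^ n) ^ p :=
    Real.rpow_le_rpow hx0 hdiv hp0
  refine le_trans hrle ?_
  -- compute the right-hand side
  have hhalf : (0:ℝ) < ε / 2 := by linarith
  have hrhs : (ε ^ t / (ε/2) ^ n) ^ p
      = (2 : ℝ) ^ ((n:ℝ) * p) * ε ^ ((t:ℝ) * p - (n:ℝ) * p) := by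
    rw [← Real.rpow_natCast ε t, ← Real.rpow_natCast (ε/2) n,
      Real.div_rpow (Real.rpow_nonneg hε0.le _) (Real.rpow_nonneg hhalf.le _),
      ← Real.rpow_mul hε0.le, ← Real.rpow_mul hhalf.le,
      Real.div_rpow hε0.le (by norm_num : (0:ℝ) ≤ 2),
      Real.rpow_sub hε0]
    field_simp
  rw [hrhs]
  have hexp : (t:ℝ) * p - (n:ℝ) * p = 1/4 - (7/4 : ℝ)/(L:ℝ) := by
    rw [htR, hnR, hpval, hLR]
    field_simp
    ring
  rw [hexp]
  have h2le : (2:ℝ) ^ ((n:ℝ) * p) ≤ 2 := by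
    calc (2:ℝ) ^ ((n:ℝ) * p) ≤ (2:ℝ) ^ (1:ℝ) := by
          apply Real.rpow_le_rpow_of_exponent_le one_le_two
          rw [hnR, hpval, ← div_eq_mul_inv, div_le_one (by positivity)]
          have hm1R : (1:ℝ) ≤ (m:ℝ) := by exact_mod_cast hm1
          nlinarith
      _ = 2 := Real.rpow_one 2
  have hrhs2 : 2 * ε ^ ((1:ℝ)/4) * ε ^ (-(7/4 / (L:ℝ))) = 2 * ε ^ (1/4 - (7/4:ℝ)/(L:ℝ)) := by
    rw [mul_assoc, ← Real.rpow_add hε0]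
    ring_nf
  rw [hrhs2]
  exact mul_le_mul_of_nonneg_right h2le (Real.rpow_nonneg hε0.le _)
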